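/- Let d ≥ 1 be an integer, p > 1 a real number, j ∈ {1, …, d}, and let U, S, Q : ℝ^d → ℝ be radially symmetric with U continuous, U positive, and S, Q twice continuously differentiable with radial profiles s and q (S(x) = s(|x|), Q(x) = q(|x|)). Suppose that for all x ≠ 0: −ΔS(x) + S(x) − p U(x)^{p−1} S(x) − (4/|x|) s'(|x|) = U(x) and −ΔQ(x) + Q(x) − p U(x)^{p−1} Q(x) = 2 S(x). Then the function h(x) := x_j² S(x) + Q(x) satisfies −Δh(x) + h(x) − p U(x)^{p−1} h(x) = x_j² U(x) for all x ≠ 0. -/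

import Mathlib

open MeasureTheory Real Filter Topology Asymptotics

/-- Partial derivative of `f` in the `j`-th coordinate direction. -/
noncomputable def pd {d : ℕ} {E : Type*} [NormedAddCommGroup E] [NormedSpace ℝ E]
    (f : EuclideanSpace ℝ (Fin d) → E) (j : Fin d) (x : EuclideanSpace ℝ (Fin d)) : E :=
  fderiv ℝ f x (EuclideanSpace.single j 1)

/-- Euclidean Laplacian: sum of second partial derivatives. -/
noncomputable def lap {d : ℕ} {E : Type*} [NormedAddCommGroup E] [NormedSpace ℝ E]
    (f : EuclideanSpace ℝ (Fin d) → E) (x : EuclideanSpace ℝ (Fin d)) : E :=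
  ∑ j, pd (pd f j) j x

/-!
By the product rule, `Δ(x_j² S) = 2 S + 4 x_j ∂_j S + x_j² ΔS`, and for radial `S` one has
`∂_j S(x) = s'(|x|) x_j / |x|`, so `4 x_j ∂_j S = x_j² (4/|x|) s'(|x|)`. Hence
`L₊(x_j² S) = x_j² (L₊ S - (4/|x|) s') - 2 S = x_j² U - 2 S`, and the term `-2 S` is cancelled
by `L₊ Q = 2 S`.
-/

section Radial

variable {E : Type*} [NormedAddCommGroup E] [InnerProductSpace ℝ E]

theorem hasFDerivAt_norm {x : E} (hx : x ≠ 0) :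
    HasFDerivAt (‖·‖) (‖x‖⁻¹ • innerSL ℝ x) x := by
  have hsq := (hasStrictFDerivAt_norm_sq x).hasFDerivAt.sqrt
    (pow_ne_zero 2 (norm_ne_zero_iff.mpr hx))
  simp only [Real.sqrt_sq (norm_nonneg _)] at hsq
  convert hsq using 1
  ext y
  simp only [smul_apply, coe_innerSL_apply, smul_eq_mul, one_div, mul_inv_rev, nsmul_eq_mul,
    Nat.cast_ofNat]
  field_simp

theorem hasDerivAt_profile_of_radial {S : E → ℝ} {s : ℝ → ℝ} {x : E}
    (hS : DifferentiableAt ℝ S x) (hSrad : ∀ y, S y = s ‖y‖) (hx : x ≠ 0) :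
    HasDerivAt s (fderiv ℝ S x (‖x‖⁻¹ • x)) ‖x‖ := by
  have hr : 0 < ‖x‖ := norm_pos_iff.mpr hx
  set e : E := ‖x‖⁻¹ • x
  have he : ‖e‖ = 1 := by simp [e, norm_smul, hr.ne']
  have hray : HasDerivAt (fun t : ℝ => t • e) e ‖x‖ := by
    simpa using (hasDerivAt_id ‖x‖).smul_const e
  have hxe : ‖x‖ • e = x := by simp [e, smul_smul, hr.ne']
  have hS' : HasDerivAt (fun t : ℝ => S (t • e)) (fderiv ℝ S x e) ‖x‖ :=
    (hxe.symm ▸ hS.hasFDerivAt : HasFDerivAt S (fderiv ℝ S x) (‖x‖ • e)).comp_hasDerivAt _ hray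
  refine hS'.congr_of_eventuallyEq ?_
  filter_upwards [eventually_gt_nhds hr] with t ht
  rw [hSrad, norm_smul, he, mul_one, Real.norm_of_nonneg ht.le]

theorem hasFDerivAt_of_radial {S : E → ℝ} {s : ℝ → ℝ} {x : E}
    (hS : DifferentiableAt ℝ S x) (hSrad : ∀ y, S y = s ‖y‖) (hx : x ≠ 0) :
    HasFDerivAt S ((deriv s ‖x‖ / ‖x‖) • innerSL ℝ x) x := by
  have hs := hasDerivAt_profile_of_radial hS hSrad hx
  rw [show S = s ∘ (‖·‖) from funext hSrad]
  have h := hs.comp_hasFDerivAt x (hasFDerivAt_norm hx)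
  rwa [← hs.deriv, smul_smul, ← div_eq_mul_inv] at h

end Radial

section Laplacian

variable {d : ℕ}

theorem pd_of_hasFDerivAt {f : EuclideanSpace ℝ (Fin d) → ℝ}
    {L : EuclideanSpace ℝ (Fin d) →L[ℝ] ℝ} {x : EuclideanSpace ℝ (Fin d)}
    (h : HasFDerivAt f L x) (i : Fin d) : pd f i x = L (EuclideanSpace.single i 1) := by
  rw [pd, h.fderiv]

theorem pd_of_radial {S : EuclideanSpace ℝ (Fin d) → ℝ} {s : ℝ → ℝ}
    {x : EuclideanSpace ℝ (Fin d)} (hS : DifferentiableAt ℝ S x) (hSrad : ∀ y, S y = s ‖y‖)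
    (hx : x ≠ 0) (i : Fin d) : pd S i x = deriv s ‖x‖ / ‖x‖ * x i := by
  rw [pd_of_hasFDerivAt (hasFDerivAt_of_radial hS hSrad hx)]
  simp [EuclideanSpace.inner_single_right]

theorem pd_coord (j i : Fin d) (x : EuclideanSpace ℝ (Fin d)) :
    pd (fun y : EuclideanSpace ℝ (Fin d) => y j) i x = if j = i then 1 else 0 := by
  have h : HasFDerivAt (fun y : EuclideanSpace ℝ (Fin d) => y j)
      (EuclideanSpace.proj j : EuclideanSpace ℝ (Fin d) →L[ℝ] ℝ) x :=
    (EuclideanSpace.proj j : EuclideanSpace ℝ (Fin d) →L[ℝ] ℝ).hasFDerivAt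
  simp [pd_of_hasFDerivAt h]

theorem pd_const (c : ℝ) (i : Fin d) (x : EuclideanSpace ℝ (Fin d)) :
    pd (fun _ : EuclideanSpace ℝ (Fin d) => c) i x = 0 := by
  simp [pd]

theorem pd_add {f g : EuclideanSpace ℝ (Fin d) → ℝ} {x : EuclideanSpace ℝ (Fin d)}
    (hf : DifferentiableAt ℝ f x) (hg : DifferentiableAt ℝ g x) (i : Fin d) :
    pd (fun y => f y + g y) i x = pd f i x + pd g i x := by
  simp [pd, fderiv_fun_add hf hg]

theorem pd_mul {f g : EuclideanSpace ℝ (Fin d) → ℝ} {x : EuclideanSpace ℝ (Fin d)}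
    (hf : DifferentiableAt ℝ f x) (hg : DifferentiableAt ℝ g x) (i : Fin d) :
    pd (fun y => f y * g y) i x = pd f i x * g x + f x * pd g i x := by
  simp only [pd, fderiv_fun_mul hf hg, add_apply, smul_apply, smul_eq_mul]
  ring

theorem ContDiff.differentiable_pd {f : EuclideanSpace ℝ (Fin d) → ℝ} (hf : ContDiff ℝ 2 f)
    (i : Fin d) : Differentiable ℝ (pd f i) :=
  ((hf.fderiv_right (m := 1) (by norm_num)).clm_apply contDiff_const).differentiable one_ne_zero

theorem lap_add {f g : EuclideanSpace ℝ (Fin d) → ℝ} (hf : ContDiff ℝ 2 f) (hg : ContDiff ℝ 2 g)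
    (x : EuclideanSpace ℝ (Fin d)) : lap (fun y => f y + g y) x = lap f x + lap g x := by
  have hpd (i : Fin d) : pd (fun y => f y + g y) i = fun y => pd f i y + pd g i y :=
    funext fun y => pd_add (hf.differentiable two_ne_zero y) (hg.differentiable two_ne_zero y) i
  simp only [lap, hpd, pd_add ((hf.differentiable_pd _) x) ((hg.differentiable_pd _) x),
    Finset.sum_add_distrib]

theorem lap_mul {f g : EuclideanSpace ℝ (Fin d) → ℝ} (hf : ContDiff ℝ 2 f) (hg : ContDiff ℝ 2 g)
    (x : EuclideanSpace ℝ (Fin d)) :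
    lap (fun y => f y * g y) x
      = lap f x * g x + 2 * ∑ i, pd f i x * pd g i x + f x * lap g x := by
  have hf1 := hf.differentiable two_ne_zero
  have hg1 := hg.differentiable two_ne_zero
  have hpd (i : Fin d) :
      pd (fun y => f y * g y) i = fun y => pd f i y * g y + f y * pd g i y :=
    funext fun y => pd_mul (hf1 y) (hg1 y) i
  have hpd2 (i : Fin d) : pd (pd (fun y => f y * g y) i) i x
      = pd (pd f i) i x * g x + 2 * (pd f i x * pd g i x) + f x * pd (pd g i) i x := by
    have hfi := hf.differentiable_pd i
    have hgi := hg.differentiable_pd i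
    rw [hpd, pd_add (by fun_prop) (by fun_prop), pd_mul (hfi x) (hg1 x), pd_mul (hf1 x) (hgi x)]
    ring
  simp only [lap, hpd2, Finset.sum_add_distrib, Finset.sum_mul, Finset.mul_sum]

theorem contDiff_coord (j : Fin d) (n : WithTop ℕ∞) :
    ContDiff ℝ n (fun y : EuclideanSpace ℝ (Fin d) => y j) := by
  fun_prop

theorem lap_coord (j : Fin d) (x : EuclideanSpace ℝ (Fin d)) :
    lap (fun y : EuclideanSpace ℝ (Fin d) => y j) x = 0 := by
  simp [lap, funext (pd_coord j _), pd_const]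

theorem pd_coord_sq (j i : Fin d) (x : EuclideanSpace ℝ (Fin d)) :
    pd (fun y : EuclideanSpace ℝ (Fin d) => y j ^ 2) i x = if j = i then 2 * x j else 0 := by
  simp only [sq]
  rw [pd_mul ((contDiff_coord j 1).differentiable one_ne_zero x)
    ((contDiff_coord j 1).differentiable one_ne_zero x), pd_coord]
  split_ifs <;> ring

theorem lap_coord_sq (j : Fin d) (x : EuclideanSpace ℝ (Fin d)) :
    lap (fun y : EuclideanSpace ℝ (Fin d) => y j ^ 2) x = 2 := by
  simp only [sq]
  rw [lap_mul (contDiff_coord j 2) (contDiff_coord j 2), lap_coord]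
  simp [pd_coord]

theorem lap_coord_sq_mul {S : EuclideanSpace ℝ (Fin d) → ℝ} (hS : ContDiff ℝ 2 S) (j : Fin d)
    (x : EuclideanSpace ℝ (Fin d)) :
    lap (fun y => y j ^ 2 * S y) x = 2 * S x + 4 * x j * pd S j x + x j ^ 2 * lap S x := by
  rw [lap_mul ((contDiff_coord j 2).pow 2) hS, lap_coord_sq]
  simp only [pd_coord_sq, ite_mul, zero_mul, Finset.sum_ite_eq, Finset.mem_univ, if_true]
  ring

end Laplacian

theorem anisotropic_isotropic_decomposition_general (d : ℕ) (p : ℝ)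
    (j : Fin d)
    (U S Q : EuclideanSpace ℝ (Fin d) → ℝ)
    (hS : ContDiff ℝ 2 S) (hQ : ContDiff ℝ 2 Q)
    (s : ℝ → ℝ)
    (hSrad : ∀ x, S x = s ‖x‖)
    (hSeq : ∀ x : EuclideanSpace ℝ (Fin d), x ≠ 0 →
      -(lap S x) + S x - p * U x ^ (p - 1) * S x - (4 / ‖x‖) * deriv s ‖x‖ = U x)
    (hQeq : ∀ x : EuclideanSpace ℝ (Fin d), x ≠ 0 →
      -(lap Q x) + Q x - p * U x ^ (p - 1) * Q x = 2 * S x) :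
    ∀ x : EuclideanSpace ℝ (Fin d), x ≠ 0 →
      -(lap (fun y => (y j) ^ 2 * S y + Q y) x)
        + ((x j) ^ 2 * S x + Q x)
        - p * U x ^ (p - 1) * ((x j) ^ 2 * S x + Q x)
      = (x j) ^ 2 * U x := by
  intro x hx
  have hlap : lap (fun y => y j ^ 2 * S y + Q y) x
      = 2 * S x + 4 * x j * pd S j x + x j ^ 2 * lap S x + lap Q x := by
    rw [lap_add (((contDiff_coord j 2).pow 2).mul hS) hQ, lap_coord_sq_mul hS]
  have hpdS := pd_of_radial (hS.differentiable two_ne_zero x) hSrad hx j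
  linear_combination -hlap + x j ^ 2 * hSeq x hx + hQeq x hx - 4 * x j * hpdS

/-- decomposition `L₊⁻¹(x_j² U) = x_j² S + Q` of the lattice-induced
correction into an anisotropic part `S` and an isotropic part `Q`. -/
theorem anisotropic_isotropic_decomposition (d : ℕ) (hd : 1 ≤ d) (p : ℝ) (hp : 1 < p)
    (j : Fin d)
    (U S Q : EuclideanSpace ℝ (Fin d) → ℝ)
    (hUcont : Continuous U) (hUpos : ∀ x, 0 < U x)
    (hS : ContDiff ℝ 2 S) (hQ : ContDiff ℝ 2 Q)
    (s q : ℝ → ℝ)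
    (hSrad : ∀ x, S x = s ‖x‖) (hQrad : ∀ x, Q x = q ‖x‖)
    (hUrad : ∃ φ : ℝ → ℝ, ∀ x, U x = φ ‖x‖)
    (hSeq : ∀ x : EuclideanSpace ℝ (Fin d), x ≠ 0 →
      -(lap S x) + S x - p * U x ^ (p - 1) * S x - (4 / ‖x‖) * deriv s ‖x‖ = U x)
    (hQeq : ∀ x : EuclideanSpace ℝ (Fin d), x ≠ 0 →
      -(lap Q x) + Q x - p * U x ^ (p - 1) * Q x = 2 * S x) :
    ∀ x : EuclideanSpace ℝ (Fin d), x ≠ 0 →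
      -(lap (fun y => (y j) ^ 2 * S y + Q y) x)
        + ((x j) ^ 2 * S x + Q x)
        - p * U x ^ (p - 1) * ((x j) ^ 2 * S x + Q x)
      = (x j) ^ 2 * U x :=
  anisotropic_isotropic_decomposition_general d p j U S Q hS hQ s hSrad hSeq hQeq
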